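/- arXiv:1110.2407 — 2 statements merged into one kernel-verified Lean document; each statement's English description precedes it below -/
import Mathlib

section
/- In any GK-model whose accessibility relation is crisp (S(x,y) ∈ {0,1}) and is an equivalence relation (reflexive, transitive, symmetric as a {0,1}-valued relation), the formula □(□φ ∨ ψ) → (□φ ∨ □ψ) is valid. -/
open scoped Classical

noncomputable def gimp (a b : ℝ) : ℝ := if a ≤ b then 1 else b

inductive GForm : Type where
  | bot : GForm
  | var : ℕ → GForm
  | and : GForm → GForm → GForm
  | or : GForm → GForm → GForm
  | imp : GForm → GForm → GForm
  | box : GForm → GForm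
  | dia : GForm → GForm

def GForm.neg (φ : GForm) : GForm := φ.imp .bot

noncomputable def ev {W : Type} (S : W → W → ℝ) (e : ℕ → W → ℝ) : GForm → W → ℝ
  | .bot, _ => 0
  | .var p, x => e p x
  | .and φ ψ, x => min (ev S e φ x) (ev S e ψ x)
  | .or φ ψ, x => max (ev S e φ x) (ev S e ψ x)
  | .imp φ ψ, x => gimp (ev S e φ x) (ev S e ψ x)
  | .box φ, x => ⨅ y, gimp (S x y) (ev S e φ y)
  | .dia φ, x => ⨆ y, min (S x y) (ev S e φ y)


/-!
With a crisp equivalence relation, `□φ` is constant on equivalence classes, so at `x` the formula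
`□(□φ ∨ ψ)` is the infimum over accessible `y` of `max a (ψ y)` with the constant `a = (□φ) x`.
Since `max a` is continuous and monotone it commutes with infima, which gives
`□(□φ ∨ ψ) = □φ ∨ □ψ` at every world, and in particular the implication takes value `1`.
-/

theorem max_ciInf {α ι : Type*} [ConditionallyCompleteLinearOrder α] [TopologicalSpace α]
    [OrderTopology α] [Nonempty ι] {f : ι → α} (hf : BddBelow (Set.range f)) (a : α) :
    max a (⨅ i, f i) = ⨅ i, max a (f i) :=
  Monotone.map_ciInf_of_continuousAt (continuous_const.max continuous_id).continuousAt
    (fun _ _ h => max_le_max_left a h) hf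

theorem iInf_mem_Icc_zero_one {ι : Type*} {f : ι → ℝ} (hf : ∀ i, f i ∈ Set.Icc (0:ℝ) 1) :
    ⨅ i, f i ∈ Set.Icc (0:ℝ) 1 := by
  refine ⟨Real.iInf_nonneg fun i => (hf i).1, ?_⟩
  rcases isEmpty_or_nonempty ι with hι | ⟨⟨i⟩⟩
  · rw [Real.iInf_of_isEmpty]
    exact zero_le_one
  · exact (ciInf_le ⟨0, Set.forall_mem_range.2 fun j => (hf j).1⟩ i).trans (hf i).2

theorem iSup_mem_Icc_zero_one {ι : Type*} {f : ι → ℝ} (hf : ∀ i, f i ∈ Set.Icc (0:ℝ) 1) :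
    ⨆ i, f i ∈ Set.Icc (0:ℝ) 1 :=
  ⟨Real.iSup_nonneg fun i => (hf i).1, Real.iSup_le (fun i => (hf i).2) zero_le_one⟩

theorem gimp_of_le {a b : ℝ} (h : a ≤ b) : gimp a b = 1 := if_pos h

theorem gimp_one_left {b : ℝ} (hb : b ≤ 1) : gimp 1 b = b := by
  unfold gimp
  split_ifs with h
  · exact le_antisymm h hb
  · rfl

theorem gimp_mem_Icc {a b : ℝ} (hb : b ∈ Set.Icc (0:ℝ) 1) : gimp a b ∈ Set.Icc (0:ℝ) 1 := by
  unfold gimp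
  split_ifs
  exacts [⟨zero_le_one, le_rfl⟩, hb]

section CrispEquivalence

variable {W : Type} (S : W → W → ℝ) (e : ℕ → W → ℝ)

theorem ev_mem_Icc (hS : ∀ x y, S x y ∈ Set.Icc (0:ℝ) 1) (he : ∀ p x, e p x ∈ Set.Icc (0:ℝ) 1)
    (φ : GForm) (x : W) : ev S e φ x ∈ Set.Icc (0:ℝ) 1 := by
  induction φ generalizing x with
  | bot => exact ⟨le_rfl, zero_le_one⟩
  | var p => exact he p x
  | and φ ψ ihφ ihψ => exact ⟨le_min (ihφ x).1 (ihψ x).1, min_le_of_left_le (ihφ x).2⟩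
  | or φ ψ ihφ ihψ => exact ⟨le_max_of_le_left (ihφ x).1, max_le (ihφ x).2 (ihψ x).2⟩
  | imp _ ψ _ ihψ => exact gimp_mem_Icc (ihψ x)
  | box φ ih => exact iInf_mem_Icc_zero_one fun y => gimp_mem_Icc (ih y)
  | dia φ ih =>
    exact iSup_mem_Icc_zero_one fun y =>
      ⟨le_min (hS x y).1 (ih y).1, min_le_of_left_le (hS x y).2⟩

variable {S}
variable (hcrisp : ∀ x y, S x y = 0 ∨ S x y = 1)
  (htrans : ∀ x y z, min (S x y) (S y z) ≤ S x z) (hsymm : ∀ x y, S x y = S y x)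
include hcrisp htrans hsymm

theorem crisp_rel_left_eq {x y : W} (hxy : S x y = 1) (z : W) : S y z = S x z := by
  have hle : ∀ {u v : W}, S u v = 1 → S v z ≤ S u z := fun {u v} huv => by
    have hvz : S v z ≤ 1 := (hcrisp v z).elim (fun h => h ▸ zero_le_one) le_of_eq
    simpa only [huv, min_eq_right hvz] using htrans u v z
  exact le_antisymm (hle hxy) (hle ((hsymm y x).trans hxy))

theorem ev_box_eq_of_rel {x y : W} (hxy : S x y = 1) (φ : GForm) :
    ev S e (.box φ) y = ev S e (.box φ) x := by
  simp only [ev, crisp_rel_left_eq hcrisp htrans hsymm hxy]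

theorem ev_box_or_box_left_eq_max [Nonempty W] (hS : ∀ x y, S x y ∈ Set.Icc (0:ℝ) 1)
    (he : ∀ p x, e p x ∈ Set.Icc (0:ℝ) 1) (φ ψ : GForm) (x : W) :
    ev S e (.box (.or (.box φ) ψ)) x = max (ev S e (.box φ) x) (ev S e (.box ψ) x) := by
  have hmem := ev_mem_Icc S e hS he
  have hpoint : ∀ y, gimp (S x y) (max (ev S e (.box φ) y) (ev S e ψ y)) =
      max (ev S e (.box φ) x) (gimp (S x y) (ev S e ψ y)) := by
    intro y
    rcases hcrisp x y with hxy | hxy <;> rw [hxy]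
    · rw [gimp_of_le (le_max_of_le_right (hmem ψ y).1), gimp_of_le (hmem ψ y).1,
        max_eq_right (hmem _ x).2]
    · rw [ev_box_eq_of_rel e hcrisp htrans hsymm hxy,
        gimp_one_left (max_le (hmem _ x).2 (hmem ψ y).2), gimp_one_left (hmem ψ y).2]
  calc ev S e (.box (.or (.box φ) ψ)) x
      = ⨅ y, max (ev S e (.box φ) x) (gimp (S x y) (ev S e ψ y)) := iInf_congr hpoint
    _ = max (ev S e (.box φ) x) (ev S e (.box ψ) x) :=
      (max_ciInf ⟨0, Set.forall_mem_range.2 fun y => (gimp_mem_Icc (hmem ψ y)).1⟩ _).symm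

end CrispEquivalence

theorem stmt14_general (W : Type) (S : W → W → ℝ) (e : ℕ → W → ℝ)
    (hS : ∀ x y, S x y ∈ Set.Icc (0:ℝ) 1) (he : ∀ p x, e p x ∈ Set.Icc (0:ℝ) 1)
    (hcrisp : ∀ x y, S x y = 0 ∨ S x y = 1)
    (htrans : ∀ x y z, min (S x y) (S y z) ≤ S x z)
    (hsymm : ∀ x y, S x y = S y x)
    (φ ψ : GForm) (x : W) :
    ev S e (.imp (.box (.or (.box φ) ψ)) (.or (.box φ) (.box ψ))) x = 1 :=
  have : Nonempty W := ⟨x⟩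
  gimp_of_le (ev_box_or_box_left_eq_max e hcrisp htrans hsymm hS he φ ψ x).le

theorem stmt14 (W : Type) [Nonempty W] (S : W → W → ℝ) (e : ℕ → W → ℝ)
    (hS : ∀ x y, S x y ∈ Set.Icc (0:ℝ) 1) (he : ∀ p x, e p x ∈ Set.Icc (0:ℝ) 1)
    (hcrisp : ∀ x y, S x y = 0 ∨ S x y = 1)
    (hrefl : ∀ x, S x x = 1)
    (htrans : ∀ x y z, min (S x y) (S y z) ≤ S x z)
    (hsymm : ∀ x y, S x y = S y x)
    (φ ψ : GForm) (x : W) :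
    ev S e (.imp (.box (.or (.box φ) ψ)) (.or (.box φ) (.box ψ))) x = 1 :=
  stmt14_general W S e hS he hcrisp htrans hsymm φ ψ x
end

section
/- Given a fuzzy frame F = (W, S) with S : W × W → [0,1], the structure [0,1]^F = ([0,1]^W, I^F, K^F), where ([0,1]^W is the product Gödel algebra and) I^F(f)(w) = inf_{w'} (S(w,w') ⇒ f(w')) and K^F(f)(w) = sup_{w'} min(S(w,w'), f(w')), is a bi-modal Gödel algebra: I^F(f ∧ g) = I^F(f) ∧ I^F(g), I^F(1) = 1, K^F(f ∨ g) = K^F(f) ∨ K^F(g), K^F(0) = 0, K^F(f) → I^F(g) ≤ I^F(f → g), and K^F(f → g) ≤ I^F(f) → K^F(g), where the lattice and Heyting operations on [0,1]^W are pointwise. -/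
open scoped Classical

noncomputable def IF {W : Type} (S : W → W → ℝ) (f : W → ℝ) : W → ℝ :=
  fun w => ⨅ w', gimp (S w w') (f w')

noncomputable def KF {W : Type} (S : W → W → ℝ) (f : W → ℝ) : W → ℝ :=
  fun w => ⨆ w', min (S w w') (f w')

/-! `gimp` is the Gödel residuum of `[0,1]`: for `c ≤ 1`, `c ≤ gimp a b ↔ min c a ≤ b`. Through
this adjunction the infimum `IF S f w` is the greatest `c ≤ 1` with `min c (S w v) ≤ f v` for all
`v`, and `KF S f w` is the least upper bound of the `min (S w v) (f v)`. The two equations follow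
by comparing lower (resp. upper) bounds, and the two inequalities reduce pointwise to modus ponens
`min (gimp a b) a ≤ b` together with `min (S w v) (f v) ≤ KF S f w` and
`min (IF S f w) (S w v) ≤ f v`. -/

section Residuum

variable {a b c : ℝ}

lemma gimp_nonneg (hb : 0 ≤ b) : 0 ≤ gimp a b := by
  unfold gimp; split_ifs <;> linarith

lemma gimp_le_one (hb : b ≤ 1) : gimp a b ≤ 1 := by
  unfold gimp; split_ifs <;> linarith

lemma le_gimp_iff (hc : c ≤ 1) : c ≤ gimp a b ↔ min c a ≤ b := by
  unfold gimp
  split_ifs with hab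
  · exact iff_of_true hc ((min_le_right c a).trans hab)
  · simp only [min_le_iff, hab, or_false]

lemma min_gimp_le : min (gimp a b) a ≤ b := by
  unfold gimp
  split_ifs with hab
  · exact (min_le_right _ _).trans hab
  · exact min_le_left _ _

lemma gimp_min (hb : b ≤ 1) : gimp a (min b c) = min (gimp a b) (gimp a c) := by
  unfold gimp
  rcases le_total b c with h | h <;>
    simp only [min_def, h, if_true] <;> split_ifs <;> first | rfl | linarith

end Residuum

section FrameOperators

variable {W : Type} {S : W → W → ℝ} {f g : W → ℝ} {w : W}

lemma bddBelow_range_gimp (hf : ∀ v, 0 ≤ f v) :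
    BddBelow (Set.range fun v => gimp (S w v) (f v)) :=
  ⟨0, by rintro _ ⟨v, rfl⟩; exact gimp_nonneg (hf v)⟩

lemma bddAbove_range_min (hS : ∀ v, S w v ≤ 1) :
    BddAbove (Set.range fun v => min (S w v) (f v)) :=
  ⟨1, by rintro _ ⟨v, rfl⟩; exact (min_le_left _ _).trans (hS v)⟩

lemma IF_le_gimp (hf : ∀ v, 0 ≤ f v) (v : W) : IF S f w ≤ gimp (S w v) (f v) :=
  ciInf_le (bddBelow_range_gimp hf) v

lemma min_le_KF (hS : ∀ v, S w v ≤ 1) (v : W) : min (S w v) (f v) ≤ KF S f w :=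
  le_ciSup (bddAbove_range_min hS) v

lemma le_IF_iff [Nonempty W] (hf : ∀ v, 0 ≤ f v) {c : ℝ} :
    c ≤ IF S f w ↔ ∀ v, c ≤ gimp (S w v) (f v) :=
  le_ciInf_iff (bddBelow_range_gimp hf)

lemma KF_le_iff [Nonempty W] (hS : ∀ v, S w v ≤ 1) {c : ℝ} :
    KF S f w ≤ c ↔ ∀ v, min (S w v) (f v) ≤ c :=
  ciSup_le_iff (bddAbove_range_min hS)

lemma IF_le_one (hf : ∀ v, f v ∈ Set.Icc (0 : ℝ) 1) (v : W) : IF S f w ≤ 1 :=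
  (IF_le_gimp (fun u => (hf u).1) v).trans (gimp_le_one (hf v).2)

lemma min_IF_le (hf : ∀ v, f v ∈ Set.Icc (0 : ℝ) 1) (v : W) : min (IF S f w) (S w v) ≤ f v :=
  (le_gimp_iff (IF_le_one hf v)).1 (IF_le_gimp (fun u => (hf u).1) v)

lemma IF_min [Nonempty W] (hf : ∀ v, f v ∈ Set.Icc (0 : ℝ) 1)
    (hg : ∀ v, 0 ≤ g v) :
    IF S (fun v => min (f v) (g v)) w = min (IF S f w) (IF S g w) :=
  eq_of_forall_le_iff fun c => by
    simp only [le_IF_iff (fun v => le_min (hf v).1 (hg v)), le_IF_iff (fun v => (hf v).1),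
      le_IF_iff hg, gimp_min (hf _).2, le_min_iff, forall_and]

lemma IF_const_one [Nonempty W] (hS : ∀ v, S w v ≤ 1) : IF S (fun _ => 1) w = 1 := by
  simp only [IF, gimp, hS, if_true, ciInf_const]

lemma KF_max [Nonempty W] (hS : ∀ v, S w v ≤ 1) :
    KF S (fun v => max (f v) (g v)) w = max (KF S f w) (KF S g w) :=
  eq_of_forall_ge_iff fun c => by
    simp only [KF_le_iff hS, min_max_distrib_left, max_le_iff, forall_and]

lemma KF_const_zero [Nonempty W] (hS : ∀ v, 0 ≤ S w v) : KF S (fun _ => 0) w = 0 := by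
  simp only [KF, min_eq_right (hS _), ciSup_const]

lemma gimp_KF_IF_le [Nonempty W] (hS : ∀ v, S w v ≤ 1)
    (hg : ∀ v, g v ∈ Set.Icc (0 : ℝ) 1) :
    gimp (KF S f w) (IF S g w) ≤ IF S (fun v => gimp (f v) (g v)) w := by
  rw [le_IF_iff fun v => gimp_nonneg (hg v).1]
  intro v
  set x := gimp (KF S f w) (IF S g w)
  have hx : x ≤ 1 := gimp_le_one (IF_le_one hg v)
  rw [le_gimp_iff hx, le_gimp_iff ((min_le_left _ _).trans hx)]
  have hK : min (min x (S w v)) (f v) ≤ KF S f w :=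
    (min_le_min_right _ (min_le_right _ _)).trans (min_le_KF hS v)
  calc min (min x (S w v)) (f v)
      ≤ min (min x (KF S f w)) (S w v) :=
        le_min (le_min ((min_le_left _ _).trans (min_le_left _ _)) hK)
          ((min_le_left _ _).trans (min_le_right _ _))
    _ ≤ min (IF S g w) (S w v) := min_le_min_right _ min_gimp_le
    _ ≤ g v := min_IF_le hg v

lemma KF_gimp_le [Nonempty W] (hS : ∀ v, S w v ≤ 1)
    (hf : ∀ v, f v ∈ Set.Icc (0 : ℝ) 1) :
    KF S (fun v => gimp (f v) (g v)) w ≤ gimp (IF S f w) (KF S g w) := by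
  rw [KF_le_iff hS]
  intro v
  rw [le_gimp_iff ((min_le_left _ _).trans (hS v))]
  have hIf : min (min (S w v) (gimp (f v) (g v))) (IF S f w) ≤ f v :=
    (le_min (min_le_right _ _) ((min_le_left _ _).trans (min_le_left _ _))).trans (min_IF_le hf v)
  calc min (min (S w v) (gimp (f v) (g v))) (IF S f w)
      ≤ min (S w v) (min (gimp (f v) (g v)) (f v)) :=
        le_min ((min_le_left _ _).trans (min_le_left _ _))
          (le_min ((min_le_left _ _).trans (min_le_right _ _)) hIf)
    _ ≤ min (S w v) (g v) := min_le_min_left _ min_gimp_le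
    _ ≤ KF S g w := min_le_KF hS v

end FrameOperators

theorem stmt18 (W : Type) [Nonempty W] (S : W → W → ℝ)
    (hS : ∀ x y, S x y ∈ Set.Icc (0:ℝ) 1)
    (f g : W → ℝ) (hf : ∀ w, f w ∈ Set.Icc (0:ℝ) 1) (hg : ∀ w, g w ∈ Set.Icc (0:ℝ) 1) :
    (IF S (fun w => min (f w) (g w)) = fun w => min (IF S f w) (IF S g w)) ∧
    (IF S (fun _ => 1) = fun _ => 1) ∧
    (KF S (fun w => max (f w) (g w)) = fun w => max (KF S f w) (KF S g w)) ∧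
    (KF S (fun _ => 0) = fun _ => 0) ∧
    (∀ w, gimp (KF S f w) (IF S g w) ≤ IF S (fun v => gimp (f v) (g v)) w) ∧
    (∀ w, KF S (fun v => gimp (f v) (g v)) w ≤ gimp (IF S f w) (KF S g w)) := by
  refine ⟨funext fun w => IF_min hf fun v => (hg v).1,
    funext fun w => IF_const_one fun v => (hS w v).2,
    funext fun w => KF_max fun v => (hS w v).2,
    funext fun w => KF_const_zero fun v => (hS w v).1,
    fun w => gimp_KF_IF_le (fun v => (hS w v).2) hg,
    fun w => KF_gimp_le (fun v => (hS w v).2) hf⟩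
end
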